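/- arXiv:2310.11620 — 4 statements merged into one kernel-verified Lean document; each statement's English description precedes it below -/
import Mathlib

section
/- Let d ≥ 1 and R > 0. For each n ≥ 1, let w_1^{(n)}, …, w_n^{(n)} be nonnegative reals with Σ_{i=1}^n w_i^{(n)} = n, and let z_1^{(n)}, …, z_n^{(n)} and y_1^{(n)}, …, y_n^{(n)} be points in the closed Euclidean ball of radius R in ℝ^d. Define ψ_n(t) = (1/n) Σ_{i=1}^n w_i^{(n)} exp(i⟨t, z_i^{(n)}⟩) and χ_n(t) = (1/n) Σ_{i=1}^n exp(i⟨t, y_i^{(n)}⟩). Suppose that ψ_n(t) → ψ(t) and χ_n(t) → χ(t) as n → ∞ for every t ∈ ℝ^d, for some functions ψ, χ : ℝ^d → ℂ. Then ∫_{ℝ^d} |ψ_n(t) − χ_n(t)|²/(C_d ‖t‖^{d+1}) dt → ∫_{ℝ^d} |ψ(t) − χ(t)|²/(C_d ‖t‖^{d+1}) dt as n → ∞. (By Lemma 3.1 the left-hand side is the weighted energy distance between the weighted empirical distribution of the z_i^{(n)} and the empirical distribution of the y_i^{(n)}; this convergence is the content of Theorem 3.2.) -/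
set_option maxHeartbeats 1000000

open MeasureTheory Filter Complex
open scoped RealInnerProductSpace BigOperators Topology

/-- The constant `C_d = π^((d+1)/2) / Γ((d+1)/2)`. -/
noncomputable def Cd (d : ℕ) : ℝ :=
  Real.pi ^ (((d : ℝ) + 1) / 2) / Real.Gamma (((d : ℝ) + 1) / 2)

lemma Cd_pos (d : ℕ) : 0 < Cd d := by
  have h : 0 < ((d:ℝ) + 1) / 2 := by positivity
  exact div_pos (Real.rpow_pos_of_pos Real.pi_pos _) (Real.Gamma_pos_of_pos h)

section AuxBound
open Metric Set in

lemma integrableOn_ball_rpow (d : ℕ) (hd : 1 ≤ d) :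
    IntegrableOn (fun x : EuclideanSpace ℝ (Fin d) => ‖x‖ ^ ((1:ℝ) - d))
      (Metric.ball 0 1) volume := by
  haveI : Nonempty (Fin d) := ⟨⟨0, hd⟩⟩
  rcases eq_or_lt_of_le hd with h1 | h2
  · have hs : (1:ℝ) - d = 0 := by rw [← h1]; norm_num
    simp only [hs, Real.rpow_zero]
    exact integrableOn_const measure_ball_lt_top.ne
  · -- 2 ≤ d
    set s : ℝ := (1:ℝ) - d with hs_def
    have hs_neg : s < 0 := by
      have : (2:ℝ) ≤ d := by exact_mod_cast h2
      simp only [hs_def]; linarith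
    have hs_ne : s ≠ 0 := hs_neg.ne
    have hmeas : Measurable fun x : EuclideanSpace ℝ (Fin d) => ‖x‖ ^ s :=
      by fun_prop
    constructor
    · exact hmeas.aestronglyMeasurable
    · rw [hasFiniteIntegral_iff_ofReal
        (Filter.Eventually.of_forall (fun x => Real.rpow_nonneg (norm_nonneg x) _))]
      rw [lintegral_eq_lintegral_meas_le _
        (Filter.Eventually.of_forall (fun x => Real.rpow_nonneg (norm_nonneg x) _))
        hmeas.aemeasurable]
      set ν := volume.restrict (Metric.ball (0 : EuclideanSpace ℝ (Fin d)) 1) with hν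
      set mB := volume (Metric.ball (0 : EuclideanSpace ℝ (Fin d)) 1) with hmB
      have hmB_lt : mB < ⊤ := measure_ball_lt_top
      calc ∫⁻ t in Ioi (0:ℝ), ν {a | t ≤ ‖a‖ ^ s}
          ≤ ∫⁻ t in Ioc (0:ℝ) 1 ∪ Ioi 1, ν {a | t ≤ ‖a‖ ^ s} :=
            lintegral_mono_set Ioi_subset_Ioc_union_Ioi
        _ ≤ (∫⁻ t in Ioc (0:ℝ) 1, ν {a | t ≤ ‖a‖ ^ s}) + ∫⁻ t in Ioi 1, ν {a | t ≤ ‖a‖ ^ s} :=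
            lintegral_union_le _ _ _
        _ < ⊤ := by
            refine ENNReal.add_lt_top.2 ⟨?_, ?_⟩
            · calc (∫⁻ t in Ioc (0:ℝ) 1, ν {a | t ≤ ‖a‖ ^ s})
                  ≤ ∫⁻ _ in Ioc (0:ℝ) 1, mB := by
                    refine setLIntegral_mono' measurableSet_Ioc (fun t _ => ?_)
                    calc ν {a | t ≤ ‖a‖ ^ s} ≤ ν univ := measure_mono (subset_univ _)
                      _ = mB := by rw [hν, Measure.restrict_apply_univ]
                _ = mB * volume (Ioc (0:ℝ) 1) := setLIntegral_const _ _
                _ < ⊤ := by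
                    refine ENNReal.mul_lt_top hmB_lt ?_
                    simp [Real.volume_Ioc]
            · have hkey : ∀ t ∈ Ioi (1:ℝ), ν {a | t ≤ ‖a‖ ^ s}
                  ≤ ENNReal.ofReal (t ^ ((d:ℝ)/s)) * mB := by
                intro t ht
                have ht1 : (1:ℝ) < t := ht
                have ht0 : (0:ℝ) < t := lt_trans one_pos ht1
                have hsub : {a : EuclideanSpace ℝ (Fin d) | t ≤ ‖a‖ ^ s}
                    ⊆ Metric.closedBall 0 (t ^ (1/s)) := by
                  intro a ha
                  simp only [Set.mem_setOf_eq] at ha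
                  rcases eq_or_ne a 0 with rfl | ha0
                  · rw [norm_zero, Real.zero_rpow hs_ne] at ha; linarith
                  · rw [mem_closedBall_zero_iff]
                    have h1s : (1:ℝ)/s ≤ 0 := by
                      apply div_nonpos_of_nonneg_of_nonpos zero_le_one hs_neg.le
                    have h2 := Real.rpow_le_rpow_of_nonpos ht0 ha h1s
                    rwa [← Real.rpow_mul (norm_nonneg a), mul_one_div_cancel hs_ne,
                      Real.rpow_one] at h2
                have hr0 : (0:ℝ) ≤ t ^ ((1:ℝ)/s) := Real.rpow_nonneg ht0.le _
                calc ν {a | t ≤ ‖a‖ ^ s}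
                    ≤ volume {a : EuclideanSpace ℝ (Fin d) | t ≤ ‖a‖ ^ s} :=
                      Measure.le_iff'.mp Measure.restrict_le_self _
                  _ ≤ volume (Metric.closedBall (0 : EuclideanSpace ℝ (Fin d)) (t ^ ((1:ℝ)/s))) :=
                      measure_mono hsub
                  _ = ENNReal.ofReal ((t ^ ((1:ℝ)/s)) ^ Module.finrank ℝ (EuclideanSpace ℝ (Fin d)))
                        * mB := Measure.addHaar_closedBall _ _ hr0
                  _ = ENNReal.ofReal (t ^ ((d:ℝ)/s)) * mB := by
                      rw [finrank_euclideanSpace_fin, ← Real.rpow_natCast (t ^ ((1:ℝ)/s)) d,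
                        ← Real.rpow_mul ht0.le]
                      congr 2
                      ring_nf
              calc (∫⁻ t in Ioi (1:ℝ), ν {a | t ≤ ‖a‖ ^ s})
                  ≤ ∫⁻ t in Ioi (1:ℝ), ENNReal.ofReal (t ^ ((d:ℝ)/s)) * mB :=
                    setLIntegral_mono' measurableSet_Ioi hkey
                _ = (∫⁻ t in Ioi (1:ℝ), ENNReal.ofReal (t ^ ((d:ℝ)/s))) * mB :=
                    lintegral_mul_const' _ _ hmB_lt.ne
                _ < ⊤ := by
                    refine ENNReal.mul_lt_top ?_ hmB_lt
                    have hlt : (d:ℝ)/s < -1 := by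
                      rw [div_lt_iff_of_neg hs_neg, hs_def]
                      nlinarith [hd, (by exact_mod_cast hd : (1:ℝ) ≤ d)]
                    exact (integrableOn_Ioi_rpow_of_lt hlt one_pos).setLIntegral_lt_top


lemma norm_exp_I_mul_sub_one_le (θ : ℝ) :
    ‖Complex.exp (Complex.I * θ) - 1‖ ≤ 2 * min 1 |θ| := by
  rcases le_total |θ| 1 with h | h
  · have h1 : ‖Complex.I * θ‖ = |θ| := by
      simp
    have h2 := Complex.norm_exp_sub_one_le (x := Complex.I * θ) (by rw [h1]; exact h)
    rw [min_eq_right h]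
    simpa [h1] using h2
  · have h2 : ‖Complex.exp (Complex.I * θ)‖ = 1 := by
      rw [Complex.norm_exp]
      simp [Complex.mul_re]
    calc ‖Complex.exp (Complex.I * θ) - 1‖
        ≤ ‖Complex.exp (Complex.I * θ)‖ + ‖(1:ℂ)‖ := norm_sub_le _ _
      _ = 2 := by rw [h2]; norm_num
      _ = 2 * min 1 |θ| := by rw [min_eq_left h]; ring

lemma diff_norm_le (d : ℕ) (R : ℝ) (n : ℕ) (hn : 1 ≤ n)
    (w : Fin n → ℝ) (z y : Fin n → EuclideanSpace ℝ (Fin d))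
    (hw : ∀ i, 0 ≤ w i) (hsum : ∑ i, w i = (n : ℝ))
    (hz : ∀ i, ‖z i‖ ≤ R) (hy : ∀ i, ‖y i‖ ≤ R) (t : EuclideanSpace ℝ (Fin d)) :
    ‖(1 / (n : ℂ)) * ∑ i, (w i : ℂ) * Complex.exp (Complex.I * (⟪t, z i⟫ : ℝ)) -
        (1 / (n : ℂ)) * ∑ i, Complex.exp (Complex.I * (⟪t, y i⟫ : ℝ))‖
      ≤ 4 * min 1 (R * ‖t‖) := by
  have hn0 : (0:ℝ) < n := by exact_mod_cast hn
  set m := min 1 (R * ‖t‖) with hm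
  have hm0 : 0 ≤ m := le_min zero_le_one (by
    have : 0 ≤ R := le_trans (norm_nonneg (z ⟨0, hn⟩)) (hz ⟨0, hn⟩)
    positivity)
  have hbz : ∀ i, ‖Complex.exp (Complex.I * (⟪t, z i⟫ : ℝ)) - 1‖ ≤ 2 * m := by
    intro i
    refine le_trans (norm_exp_I_mul_sub_one_le _) ?_
    have h1 : |⟪t, z i⟫| ≤ R * ‖t‖ := by
      calc |⟪t, z i⟫| ≤ ‖t‖ * ‖z i‖ := abs_real_inner_le_norm t (z i)
        _ ≤ ‖t‖ * R := by
          have := hz i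
          have h0 : (0:ℝ) ≤ ‖t‖ := norm_nonneg t
          nlinarith
        _ = R * ‖t‖ := mul_comm _ _
    have := min_le_min (le_refl (1:ℝ)) h1
    linarith
  have hby : ∀ i, ‖Complex.exp (Complex.I * (⟪t, y i⟫ : ℝ)) - 1‖ ≤ 2 * m := by
    intro i
    refine le_trans (norm_exp_I_mul_sub_one_le _) ?_
    have h1 : |⟪t, y i⟫| ≤ R * ‖t‖ := by
      calc |⟪t, y i⟫| ≤ ‖t‖ * ‖y i‖ := abs_real_inner_le_norm t (y i)
        _ ≤ ‖t‖ * R := by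
          have := hy i
          have h0 : (0:ℝ) ≤ ‖t‖ := norm_nonneg t
          nlinarith
        _ = R * ‖t‖ := mul_comm _ _
    have := min_le_min (le_refl (1:ℝ)) h1
    linarith
  have hcast : (∑ i, (w i : ℂ)) = (n : ℂ) := by
    exact_mod_cast congrArg Complex.ofReal hsum
  have hsplit : (1 / (n : ℂ)) * ∑ i, (w i : ℂ) * Complex.exp (Complex.I * (⟪t, z i⟫ : ℝ)) -
        (1 / (n : ℂ)) * ∑ i, Complex.exp (Complex.I * (⟪t, y i⟫ : ℝ)) =
      (1 / (n : ℂ)) * (∑ i, (w i : ℂ) * (Complex.exp (Complex.I * (⟪t, z i⟫ : ℝ)) - 1)) -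
        (1 / (n : ℂ)) * (∑ i, (Complex.exp (Complex.I * (⟪t, y i⟫ : ℝ)) - 1)) := by
    have h1 : ∑ i, (w i : ℂ) * (Complex.exp (Complex.I * (⟪t, z i⟫ : ℝ)) - 1) =
        (∑ i, (w i : ℂ) * Complex.exp (Complex.I * (⟪t, z i⟫ : ℝ))) - (n : ℂ) := by
      simp only [mul_sub, mul_one, Finset.sum_sub_distrib, hcast]
    have h2 : ∑ i, (Complex.exp (Complex.I * (⟪t, y i⟫ : ℝ)) - 1) =
        (∑ i, Complex.exp (Complex.I * (⟪t, y i⟫ : ℝ))) - (n : ℂ) := by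
      simp only [Finset.sum_sub_distrib, Finset.sum_const, Finset.card_univ, Fintype.card_fin,
        nsmul_eq_mul, mul_one]
    rw [h1, h2]; ring
  rw [hsplit]
  have hnorm_inv : ‖(1 / (n : ℂ))‖ = 1 / (n : ℝ) := by
    simp [norm_div]
  have hfirst : ‖(1 / (n : ℂ)) * (∑ i, (w i : ℂ) *
      (Complex.exp (Complex.I * (⟪t, z i⟫ : ℝ)) - 1))‖ ≤ 2 * m := by
    rw [norm_mul, hnorm_inv]
    have hS : ‖∑ i, (w i : ℂ) * (Complex.exp (Complex.I * (⟪t, z i⟫ : ℝ)) - 1)‖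
        ≤ (n : ℝ) * (2 * m) := by
      calc ‖∑ i, (w i : ℂ) * (Complex.exp (Complex.I * (⟪t, z i⟫ : ℝ)) - 1)‖
          ≤ ∑ i, ‖(w i : ℂ) * (Complex.exp (Complex.I * (⟪t, z i⟫ : ℝ)) - 1)‖ :=
            norm_sum_le _ _
        _ ≤ ∑ i, w i * (2 * m) := by
            refine Finset.sum_le_sum (fun i _ => ?_)
            rw [norm_mul, Complex.norm_real, Real.norm_eq_abs, _root_.abs_of_nonneg (hw i)]
            exact mul_le_mul_of_nonneg_left (hbz i) (hw i)
        _ = (n : ℝ) * (2 * m) := by rw [← Finset.sum_mul, hsum]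
    calc (1 / (n:ℝ)) * ‖∑ i, (w i : ℂ) * (Complex.exp (Complex.I * (⟪t, z i⟫ : ℝ)) - 1)‖
        ≤ (1 / (n:ℝ)) * ((n : ℝ) * (2 * m)) := by
          exact mul_le_mul_of_nonneg_left hS (by positivity)
      _ = 2 * m := by field_simp
  have hsecond : ‖(1 / (n : ℂ)) * (∑ i, (Complex.exp (Complex.I * (⟪t, y i⟫ : ℝ)) - 1))‖
      ≤ 2 * m := by
    rw [norm_mul, hnorm_inv]
    have hS : ‖∑ i, (Complex.exp (Complex.I * (⟪t, y i⟫ : ℝ)) - 1)‖ ≤ (n : ℝ) * (2 * m) := by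
      calc ‖∑ i, (Complex.exp (Complex.I * (⟪t, y i⟫ : ℝ)) - 1)‖
          ≤ ∑ i, ‖Complex.exp (Complex.I * (⟪t, y i⟫ : ℝ)) - 1‖ := norm_sum_le _ _
        _ ≤ ∑ _i : Fin n, 2 * m := Finset.sum_le_sum (fun i _ => hby i)
        _ = (n : ℝ) * (2 * m) := by
            rw [Finset.sum_const, Finset.card_univ, Fintype.card_fin, nsmul_eq_mul]
    calc (1 / (n:ℝ)) * ‖∑ i, (Complex.exp (Complex.I * (⟪t, y i⟫ : ℝ)) - 1)‖
        ≤ (1 / (n:ℝ)) * ((n : ℝ) * (2 * m)) := mul_le_mul_of_nonneg_left hS (by positivity)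
      _ = 2 * m := by field_simp
  calc ‖(1 / (n : ℂ)) * (∑ i, (w i : ℂ) * (Complex.exp (Complex.I * (⟪t, z i⟫ : ℝ)) - 1)) -
        (1 / (n : ℂ)) * (∑ i, (Complex.exp (Complex.I * (⟪t, y i⟫ : ℝ)) - 1))‖
      ≤ ‖(1 / (n : ℂ)) * (∑ i, (w i : ℂ) * (Complex.exp (Complex.I * (⟪t, z i⟫ : ℝ)) - 1))‖ +
        ‖(1 / (n : ℂ)) * (∑ i, (Complex.exp (Complex.I * (⟪t, y i⟫ : ℝ)) - 1))‖ := norm_sub_le _ _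
    _ ≤ 2 * m + 2 * m := add_le_add hfirst hsecond
    _ = 4 * m := by ring

end AuxBound

/-- Theorem 3.2: if the weighted empirical characteristic functions `ψ_n` of
the weighted sample `z` and the empirical characteristic functions `χ_n` of the
shifted sample `y` converge pointwise, then the weighted energy distances
(written via their characteristic-function representation) converge to the
corresponding weighted `L²` distance of the limits. -/
theorem weighted_energy_distance_tendsto (d : ℕ) (hd : 1 ≤ d) (R : ℝ) (hR : 0 < R)
    (w : (n : ℕ) → Fin n → ℝ) (z y : (n : ℕ) → Fin n → EuclideanSpace ℝ (Fin d))
    (hw : ∀ n, 1 ≤ n → ∀ i, 0 ≤ w n i)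
    (hsum : ∀ n, 1 ≤ n → ∑ i, w n i = (n : ℝ))
    (hz : ∀ n, 1 ≤ n → ∀ i, ‖z n i‖ ≤ R)
    (hy : ∀ n, 1 ≤ n → ∀ i, ‖y n i‖ ≤ R)
    (ψ χ : EuclideanSpace ℝ (Fin d) → ℂ)
    (hψ : ∀ t, Tendsto
      (fun (n : ℕ) => (1 / (n : ℂ)) * ∑ i, (w n i : ℂ) * Complex.exp (Complex.I * (⟪t, z n i⟫ : ℝ)))
      atTop (𝓝 (ψ t)))
    (hχ : ∀ t, Tendsto
      (fun (n : ℕ) => (1 / (n : ℂ)) * ∑ i, Complex.exp (Complex.I * (⟪t, y n i⟫ : ℝ)))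
      atTop (𝓝 (χ t))) :
    Tendsto
      (fun (n : ℕ) => ∫ t : EuclideanSpace ℝ (Fin d),
        ‖(1 / (n : ℂ)) * ∑ i, (w n i : ℂ) * Complex.exp (Complex.I * (⟪t, z n i⟫ : ℝ)) -
            (1 / (n : ℂ)) * ∑ i, Complex.exp (Complex.I * (⟪t, y n i⟫ : ℝ))‖ ^ 2 /
          (Cd d * ‖t‖ ^ (d + 1)))
      atTop
      (𝓝 (∫ t : EuclideanSpace ℝ (Fin d),
        ‖ψ t - χ t‖ ^ 2 / (Cd d * ‖t‖ ^ (d + 1)))) := by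
  haveI : Nonempty (Fin d) := ⟨⟨0, hd⟩⟩
  have hCd := Cd_pos d
  -- the dominating function
  set h : EuclideanSpace ℝ (Fin d) → ℝ := fun t =>
    (Metric.ball (0 : EuclideanSpace ℝ (Fin d)) 1).indicator (fun t => (16 * R^2 / Cd d) * ‖t‖ ^ ((1:ℝ) - d)) t +
      (16 * 2^(d+1) / Cd d) * (1 + ‖t‖) ^ (-((d:ℝ)+1)) with hh
  have hint : Integrable h := by
    refine Integrable.add ?_ ?_
    · have h1 : IntegrableOn (fun x : EuclideanSpace ℝ (Fin d) => (16 * R^2 / Cd d) * ‖x‖ ^ ((1:ℝ) - d))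
          (Metric.ball 0 1) volume := (integrableOn_ball_rpow d hd).const_mul _
      exact h1.integrable_indicator measurableSet_ball
    · refine Integrable.const_mul ?_ _
      refine integrable_one_add_norm ?_
      rw [finrank_euclideanSpace_fin]
      linarith
  have h_nonneg : ∀ t, 0 ≤ h t := by
    intro t
    refine add_nonneg ?_ ?_
    · refine Set.indicator_nonneg (fun x _ => ?_) t
      have : 0 ≤ ‖x‖ ^ ((1:ℝ) - d) := Real.rpow_nonneg (norm_nonneg x) _
      positivity
    · have : (0:ℝ) ≤ (1 + ‖t‖) ^ (-((d:ℝ)+1)) := Real.rpow_nonneg (by positivity) _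
      positivity
  refine tendsto_integral_filter_of_dominated_convergence h ?_ ?_ hint ?_
  · -- measurability
    refine Eventually.of_forall (fun n => ?_)
    have hA : Continuous fun t : EuclideanSpace ℝ (Fin d) =>
        (1 / (n : ℂ)) * ∑ i, (w n i : ℂ) * Complex.exp (Complex.I * (⟪t, z n i⟫ : ℝ)) := by
      refine continuous_const.mul (continuous_finset_sum _ (fun i _ => ?_))
      exact continuous_const.mul (Complex.continuous_exp.comp (continuous_const.mul
        (Complex.continuous_ofReal.comp (continuous_id.inner continuous_const))))
    have hB : Continuous fun t : EuclideanSpace ℝ (Fin d) =>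
        (1 / (n : ℂ)) * ∑ i, Complex.exp (Complex.I * (⟪t, y n i⟫ : ℝ)) := by
      refine continuous_const.mul (continuous_finset_sum _ (fun i _ => ?_))
      exact Complex.continuous_exp.comp (continuous_const.mul
        (Complex.continuous_ofReal.comp (continuous_id.inner continuous_const)))
    have hnum : Continuous fun t : EuclideanSpace ℝ (Fin d) =>
        ‖(1 / (n : ℂ)) * ∑ i, (w n i : ℂ) * Complex.exp (Complex.I * (⟪t, z n i⟫ : ℝ)) -
            (1 / (n : ℂ)) * ∑ i, Complex.exp (Complex.I * (⟪t, y n i⟫ : ℝ))‖ ^ 2 :=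
      ((hA.sub hB).norm).pow 2
    exact (hnum.measurable.div
      (measurable_const.mul (measurable_norm.pow_const (d+1)))).aestronglyMeasurable
  · -- domination
    filter_upwards [eventually_ge_atTop 1] with n hn
    refine ae_of_all _ (fun t => ?_)
    have hdiff : ‖(1 / (n : ℂ)) * ∑ i, (w n i : ℂ) * Complex.exp (Complex.I * (⟪t, z n i⟫ : ℝ)) -
        (1 / (n : ℂ)) * ∑ i, Complex.exp (Complex.I * (⟪t, y n i⟫ : ℝ))‖
        ≤ 4 * min 1 (R * ‖t‖) :=
      diff_norm_le d R n hn (w n) (z n) (y n) (hw n hn) (hsum n hn) (hz n hn) (hy n hn) t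
    have hden_nonneg : (0:ℝ) ≤ Cd d * ‖t‖^(d+1) := by positivity
    have hF_nonneg : (0:ℝ) ≤ ‖(1 / (n : ℂ)) * ∑ i, (w n i : ℂ) *
        Complex.exp (Complex.I * (⟪t, z n i⟫ : ℝ)) -
        (1 / (n : ℂ)) * ∑ i, Complex.exp (Complex.I * (⟪t, y n i⟫ : ℝ))‖ ^ 2 /
        (Cd d * ‖t‖ ^ (d + 1)) := by positivity
    rw [Real.norm_of_nonneg hF_nonneg]
    rcases eq_or_ne t 0 with rfl | ht0
    · have : ‖(0 : EuclideanSpace ℝ (Fin d))‖ ^ (d+1) = 0 := by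
        rw [norm_zero]; exact zero_pow (Nat.succ_ne_zero d)
      rw [this, mul_zero, div_zero]
      exact h_nonneg 0
    · have htpos : (0:ℝ) < ‖t‖ := norm_pos_iff.mpr ht0
      have hden_pos : (0:ℝ) < Cd d * ‖t‖^(d+1) := by positivity
      have hm0 : (0:ℝ) ≤ min 1 (R * ‖t‖) := le_min zero_le_one (by positivity)
      have hterm2_nonneg : (0:ℝ) ≤ (16 * 2^(d+1) / Cd d) * (1 + ‖t‖) ^ (-((d:ℝ)+1)) := by
        have : (0:ℝ) ≤ (1 + ‖t‖) ^ (-((d:ℝ)+1)) := Real.rpow_nonneg (by positivity) _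
        positivity
      rcases lt_or_ge ‖t‖ 1 with hlt | hge
      · -- small t
        have hnum_le : ‖(1 / (n : ℂ)) * ∑ i, (w n i : ℂ) *
            Complex.exp (Complex.I * (⟪t, z n i⟫ : ℝ)) -
            (1 / (n : ℂ)) * ∑ i, Complex.exp (Complex.I * (⟪t, y n i⟫ : ℝ))‖ ^ 2
            ≤ (4 * (R * ‖t‖))^2 := by
          refine pow_le_pow_left₀ (norm_nonneg _) (hdiff.trans ?_) 2
          nlinarith [min_le_right (1:ℝ) (R * ‖t‖)]
        have hpow : ‖t‖^(2:ℕ) / ‖t‖^(d+1) = ‖t‖ ^ ((1:ℝ) - d) := by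
          rw [← Real.rpow_natCast ‖t‖ 2, ← Real.rpow_natCast ‖t‖ (d+1),
            ← Real.rpow_sub htpos]
          congr 1
          push_cast
          ring
        calc ‖(1 / (n : ℂ)) * ∑ i, (w n i : ℂ) *
              Complex.exp (Complex.I * (⟪t, z n i⟫ : ℝ)) -
              (1 / (n : ℂ)) * ∑ i, Complex.exp (Complex.I * (⟪t, y n i⟫ : ℝ))‖ ^ 2 /
              (Cd d * ‖t‖ ^ (d + 1))
            ≤ (4 * (R * ‖t‖))^2 / (Cd d * ‖t‖ ^ (d + 1)) :=
              (div_le_div_iff_of_pos_right hden_pos).mpr hnum_le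
          _ = (16 * R^2 / Cd d) * (‖t‖^(2:ℕ) / ‖t‖^(d+1)) := by
              field_simp
              ring
          _ = (16 * R^2 / Cd d) * ‖t‖ ^ ((1:ℝ) - d) := by rw [hpow]
          _ ≤ h t := by
              rw [hh]
              simp only
              rw [Set.indicator_of_mem (mem_ball_zero_iff.mpr hlt)]
              exact le_add_of_nonneg_right hterm2_nonneg
      · -- large t
        have hnum_le : ‖(1 / (n : ℂ)) * ∑ i, (w n i : ℂ) *
            Complex.exp (Complex.I * (⟪t, z n i⟫ : ℝ)) -
            (1 / (n : ℂ)) * ∑ i, Complex.exp (Complex.I * (⟪t, y n i⟫ : ℝ))‖ ^ 2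
            ≤ 16 := by
          nlinarith [hdiff, min_le_left (1:ℝ) (R * ‖t‖), norm_nonneg
            ((1 / (n : ℂ)) * ∑ i, (w n i : ℂ) * Complex.exp (Complex.I * (⟪t, z n i⟫ : ℝ)) -
              (1 / (n : ℂ)) * ∑ i, Complex.exp (Complex.I * (⟪t, y n i⟫ : ℝ)))]
        have hrw : ((1:ℝ) + ‖t‖) ^ (-((d:ℝ)+1)) = (((1:ℝ)+‖t‖)^(d+1))⁻¹ := by
          rw [show -((d:ℝ)+1) = -(((d+1:ℕ)):ℝ) by push_cast; ring,
            Real.rpow_neg (by positivity), Real.rpow_natCast]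
        have hkey : ((1:ℝ)+‖t‖)^(d+1) ≤ 2^(d+1) * ‖t‖^(d+1) := by
          rw [← mul_pow]
          exact pow_le_pow_left₀ (by positivity) (by linarith) _
        calc ‖(1 / (n : ℂ)) * ∑ i, (w n i : ℂ) *
              Complex.exp (Complex.I * (⟪t, z n i⟫ : ℝ)) -
              (1 / (n : ℂ)) * ∑ i, Complex.exp (Complex.I * (⟪t, y n i⟫ : ℝ))‖ ^ 2 /
              (Cd d * ‖t‖ ^ (d + 1))
            ≤ 16 / (Cd d * ‖t‖ ^ (d + 1)) := (div_le_div_iff_of_pos_right hden_pos).mpr hnum_le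
          _ ≤ (16 * 2^(d+1) / Cd d) * ((1:ℝ) + ‖t‖) ^ (-((d:ℝ)+1)) := by
              rw [hrw]
              have heq : (16 * 2^(d+1) / Cd d) * (((1:ℝ)+‖t‖)^(d+1))⁻¹
                  = (16 * 2^(d+1)) / (Cd d * ((1:ℝ)+‖t‖)^(d+1)) := by
                field_simp
              rw [heq, div_le_div_iff₀ hden_pos (by positivity)]
              have h2 := mul_le_mul_of_nonneg_left hkey (le_of_lt hCd)
              nlinarith [h2]
          _ ≤ h t := by
              rw [hh]
              simp only
              rw [Set.indicator_of_notMem (by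
                simp only [mem_ball_zero_iff, not_lt]
                exact hge)]
              rw [zero_add]
  · -- pointwise convergence
    refine ae_of_all _ (fun t => ?_)
    exact (((hψ t).sub (hχ t)).norm.pow 2).div_const _
end

section
/- Let d ≥ 1 and n ≥ 1 be integers and let z_1, …, z_n and y_1, …, y_n be points in ℝ^d. Define f : ℝ^n → ℝ by f(w) = (2/n²) Σ_{i=1}^n Σ_{k=1}^n w_i ‖z_i − y_k‖ − (1/n²) Σ_{i=1}^n Σ_{k=1}^n w_i w_k ‖z_i − z_k‖ − (1/n²) Σ_{i=1}^n Σ_{k=1}^n ‖y_i − y_k‖. Then f is convex on the affine hyperplane H = {w ∈ ℝ^n : Σ_{i=1}^n w_i = n}; that is, for all w, w' ∈ H and θ ∈ [0,1], f(θw + (1−θ)w') ≤ θ f(w) + (1−θ) f(w'). -/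
open scoped BigOperators

open MeasureTheory

lemma oneD {n : ℕ} (u a : Fin n → ℝ) (hu : ∑ i, u i = 0) :
    ∑ i, ∑ k, u i * u k * |a i - a k| ≤ 0 := by
  rcases Nat.eq_zero_or_pos n with h | h
  · subst h; simp
  haveI : Nonempty (Fin n) := ⟨⟨0, h⟩⟩
  obtain ⟨i₀, -, hi₀⟩ := Finset.exists_min_image Finset.univ a
    ⟨Classical.arbitrary _, Finset.mem_univ _⟩
  set m := a i₀ with hm
  have hma : ∀ i, m ≤ a i := fun i => hi₀ i (Finset.mem_univ i)
  -- indicator functions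
  set g : Fin n → ℝ → ℝ := fun i => (Set.Ioc m (a i)).indicator 1 with hgdef
  have hprod : ∀ i k, ∀ t, (u i * g i t) * (u k * g k t)
      = (Set.Ioc m (min (a i) (a k))).indicator (fun _ => u i * u k) t := by
    intro i k t
    have h1 : g i t * g k t = (Set.Ioc m (min (a i) (a k))).indicator 1 t := by
      have hh := congrFun (Set.inter_indicator_one
        (s := Set.Ioc m (a i)) (t := Set.Ioc m (a k)) (M₀ := ℝ)) t
      rw [hgdef]
      simp only [Pi.mul_apply] at hh ⊢
      rw [← hh, Set.Ioc_inter_Ioc, max_self]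
    calc (u i * g i t) * (u k * g k t) = (u i * u k) * (g i t * g k t) := by ring
      _ = (u i * u k) * (Set.Ioc m (min (a i) (a k))).indicator 1 t := by rw [h1]
      _ = _ := by by_cases ht : t ∈ Set.Ioc m (min (a i) (a k)) <;> simp [ht]
  have hint : ∀ i k, Integrable ((Set.Ioc m (min (a i) (a k))).indicator
      (fun _ => u i * u k) : ℝ → ℝ) := by
    intro i k
    rw [integrable_indicator_iff measurableSet_Ioc]
    exact integrableOn_const measure_Ioc_lt_top.ne
  have hval : ∀ i k, ∫ t, (Set.Ioc m (min (a i) (a k))).indicator (fun _ => u i * u k) t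
      = u i * u k * (min (a i) (a k) - m) := by
    intro i k
    rw [integral_indicator_const _ measurableSet_Ioc, Real.volume_real_Ioc_of_le (by simp [hma i, hma k] : m ≤ min (a i) (a k))]
    simp [mul_comm]
  have hSmin : 0 ≤ ∑ i, ∑ k, u i * u k * (min (a i) (a k) - m) := by
    have h0 : 0 ≤ ∫ t, (∑ i, u i * g i t) ^ 2 := integral_nonneg fun t => sq_nonneg _
    have heq : ∫ t, (∑ i, u i * g i t) ^ 2
        = ∑ i, ∑ k, u i * u k * (min (a i) (a k) - m) := by
      have hpt : ∀ t, (∑ i, u i * g i t) ^ 2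
          = ∑ i, ∑ k, (Set.Ioc m (min (a i) (a k))).indicator (fun _ => u i * u k) t := by
        intro t
        rw [sq, Finset.sum_mul_sum]
        exact Finset.sum_congr rfl fun i _ => Finset.sum_congr rfl fun k _ => hprod i k t
      simp_rw [hpt]
      rw [integral_finset_sum _ fun i _ => integrable_finset_sum _ fun k _ => hint i k]
      refine Finset.sum_congr rfl fun i _ => ?_
      rw [integral_finset_sum _ fun k _ => hint i k]
      exact Finset.sum_congr rfl fun k _ => hval i k
    linarith [heq ▸ h0]
  -- now translate
  have habs : ∀ i k, |a i - a k| = a i + a k - 2 * min (a i) (a k) := by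
    intro i k
    rcases le_total (a i) (a k) with h' | h'
    · rw [abs_of_nonpos (by linarith), min_eq_left h']; ring
    · rw [abs_of_nonneg (by linarith), min_eq_right h']; ring
  have hlin : ∑ i, ∑ k, u i * u k * (a i + a k) = 0 := by
    have : ∀ i, ∑ k, u i * u k * (a i + a k)
        = u i * a i * (∑ k, u k) + u i * (∑ k, u k * a k) := by
      intro i
      rw [Finset.mul_sum, Finset.mul_sum, ← Finset.sum_add_distrib]
      exact Finset.sum_congr rfl fun k _ => by ring
    simp_rw [this, hu, mul_zero, zero_add, ← Finset.sum_mul]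
    rw [hu, zero_mul]
  have hconst : ∑ i, ∑ k, u i * u k * m = 0 := by
    simp_rw [show ∀ i k, u i * u k * m = u i * (u k * m) from fun i k => by ring,
      ← Finset.mul_sum, ← Finset.sum_mul, hu]
    simp
  have hexpand : ∀ i k : Fin n, u i * u k * |a i - a k|
      = u i * u k * (a i + a k) - 2 * (u i * u k * (min (a i) (a k) - m))
        - 2 * (u i * u k * m) := fun i k => by rw [habs i k]; ring
  simp_rw [hexpand, Finset.sum_sub_distrib, ← Finset.mul_sum]
  linarith [hSmin, hlin, hconst]

lemma exists_onb {d : ℕ} (hd : 1 ≤ d) {x : EuclideanSpace ℝ (Fin d)} (hx : x ≠ 0) :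
    ∃ b : OrthonormalBasis (Fin d) ℝ (EuclideanSpace ℝ (Fin d)),
      b ⟨0, hd⟩ = ‖x‖⁻¹ • x := by
  have hxn : ‖x‖ ≠ 0 := norm_ne_zero_iff.2 hx
  have horth : Orthonormal ℝ
      (Set.restrict {(⟨0, hd⟩ : Fin d)} fun _ : Fin d => ‖x‖⁻¹ • x) := by
    constructor
    · rintro ⟨i, hi⟩
      show ‖‖x‖⁻¹ • x‖ = 1
      rw [norm_smul, norm_inv, norm_norm, inv_mul_cancel₀ hxn]
    · rintro ⟨i, hi⟩ ⟨j, hj⟩ hij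
      exfalso
      apply hij
      simp only [Set.mem_singleton_iff] at hi hj
      exact Subtype.ext (hi.trans hj.symm)
  have hcard : Module.finrank ℝ (EuclideanSpace ℝ (Fin d)) = Fintype.card (Fin d) :=
    finrank_euclideanSpace
  obtain ⟨b, hb⟩ := horth.exists_orthonormalBasis_extension_of_card_eq hcard
  exact ⟨b, hb _ rfl⟩

open scoped RealInnerProductSpace in
lemma keyint {d : ℕ} (hd : 1 ≤ d) :
    ∃ c : ℝ, 0 < c ∧
      (∀ x : EuclideanSpace ℝ (Fin d),
        Integrable (fun g : EuclideanSpace ℝ (Fin d) => |⟪x, g⟫| * Real.exp (-‖g‖^2 / 2))) ∧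
      ∀ x : EuclideanSpace ℝ (Fin d),
        ∫ g : EuclideanSpace ℝ (Fin d), |⟪x, g⟫| * Real.exp (-‖g‖^2 / 2) = ‖x‖ * c := by
  set E := EuclideanSpace ℝ (Fin d) with hE
  set i₀ : Fin d := ⟨0, hd⟩ with hi₀def
  set W : E → ℝ := fun g => Real.exp (-‖g‖^2 / 2) with hW
  set φ : E → ℝ := fun g => |g i₀| * W g with hφ
  have hnorm : ∀ g : E, ‖g‖^2 = ∑ i, (g i)^2 := by
    intro g
    rw [EuclideanSpace.norm_eq, Real.sq_sqrt (by positivity)]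
    simp [sq_abs]
  -- integrability of φ
  set F : Fin d → ℝ → ℝ :=
    fun i t => (if i = i₀ then |t| else 1) * Real.exp (-(1/2) * t^2) with hF
  have hFint : ∀ i, Integrable (F i) := by
    intro i
    by_cases hi : i = i₀
    · have h0 := (integrable_mul_exp_neg_mul_sq (by norm_num : (0:ℝ) < 1/2)).abs
      have : (fun t : ℝ => |t * Real.exp (-(1/2) * t^2)|) = F i := by
        funext t
        rw [abs_mul, abs_of_pos (Real.exp_pos _), hF]
        simp [hi]
      rwa [this] at h0
    · have h0 := integrable_exp_neg_mul_sq (by norm_num : (0:ℝ) < 1/2)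
      have : (fun t : ℝ => Real.exp (-(1/2) * t^2)) = F i := by
        funext t; simp [hF, hi]
      rwa [this] at h0
  have hφint : Integrable φ := by
    have hmp := (EuclideanSpace.volume_preserving_symm_measurableEquiv_toLp (Fin d)).symm
    rw [← hmp.integrable_comp_emb (MeasurableEquiv.measurableEmbedding _)]
    have heq : (φ ∘ (MeasurableEquiv.toLp 2 (Fin d → ℝ)).symm.symm)
        = fun x : Fin d → ℝ => ∏ i, F i (x i) := by
      funext x
      have hx : ∀ i : Fin d,
          ((MeasurableEquiv.toLp 2 (Fin d → ℝ)).symm.symm x) i = x i := fun i => rfl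
      simp only [Function.comp_apply, hφ, hW, hnorm, hx, hF]
      rw [Finset.prod_mul_distrib, Finset.prod_ite_eq' Finset.univ i₀ (fun i => |x i|),
        ← Real.exp_sum]
      simp only [Finset.mem_univ, if_true]
      congr 1
      rw [neg_div, Finset.sum_div, ← Finset.sum_neg_distrib]
      congr 1
      exact Finset.sum_congr rfl fun i _ => by ring
    rw [heq]
    exact Integrable.fintype_prod hFint
  -- positivity of c
  have hφnn : ∀ g, 0 ≤ φ g := fun g => mul_nonneg (abs_nonneg _) (Real.exp_pos _).le
  have hc : 0 < ∫ g, φ g := by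
    rw [integral_pos_iff_support_of_nonneg hφnn hφint]
    have hsupp : Function.support φ = (fun g : E => g i₀) ⁻¹' {(0:ℝ)}ᶜ := by
      ext g
      simp only [Function.mem_support, hφ, hW, Set.mem_preimage, Set.mem_compl_iff,
        Set.mem_singleton_iff, mul_ne_zero_iff, abs_ne_zero]
      constructor
      · exact fun h => h.1
      · exact fun h => ⟨h, Real.exp_ne_zero _⟩
    rw [hsupp]
    have hcont : Continuous (fun g : E => g i₀) := by
      exact (continuous_apply i₀).comp (PiLp.continuous_ofLp 2 (fun _ : Fin d => ℝ))
    refine (hcont.isOpen_preimage _ (isOpen_compl_singleton)).measure_pos volume ?_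
    exact ⟨EuclideanSpace.single i₀ 1, by simp⟩
  refine ⟨∫ g, φ g, hc, ?_, ?_⟩
  · -- integrability, for all x
    intro x
    by_cases hx : x = 0
    · simp only [hx, inner_zero_left, abs_zero, zero_mul]
      exact integrable_zero _ _ _
    · have hxn : ‖x‖ ≠ 0 := norm_ne_zero_iff.2 hx
      obtain ⟨b, hb0⟩ := exists_onb hd hx
      have hmp := (b.repr : E ≃ₗᵢ[ℝ] EuclideanSpace ℝ (Fin d)).measurePreserving
      have hcomp : Integrable (φ ∘ b.repr) :=
        (hmp.integrable_comp_emb b.repr.toHomeomorph.measurableEmbedding).2 hφint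
      have heq : (fun g : E => |⟪x, g⟫| * Real.exp (-‖g‖^2 / 2))
          = fun g => ‖x‖ * (φ ∘ b.repr) g := by
        funext g
        simp only [Function.comp_apply, hφ, hW, b.repr.norm_map,
          OrthonormalBasis.repr_apply_apply, hi₀def, hb0, real_inner_smul_left, abs_mul,
          abs_inv, abs_norm, real_inner_comm (b i₀)]
        field_simp
      rw [heq]
      exact hcomp.const_mul _
  · -- the formula
    intro x
    by_cases hx : x = 0
    · simp [hx]
    · have hxn : ‖x‖ ≠ 0 := norm_ne_zero_iff.2 hx
      obtain ⟨b, hb0⟩ := exists_onb hd hx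
      have hmp := (b.repr : E ≃ₗᵢ[ℝ] EuclideanSpace ℝ (Fin d)).measurePreserving
      have hci : ∫ g : E, φ (b.repr g) = ∫ g, φ g :=
        hmp.integral_comp b.repr.toHomeomorph.measurableEmbedding φ
      have heq : ∀ g : E, φ (b.repr g) = ‖x‖⁻¹ * (|⟪x, g⟫| * Real.exp (-‖g‖^2 / 2)) := by
        intro g
        simp only [hφ, hW, b.repr.norm_map, OrthonormalBasis.repr_apply_apply, hi₀def, hb0,
          real_inner_smul_left, abs_mul, abs_inv, abs_norm, real_inner_comm (b i₀)]
        ring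
      rw [← hci]
      simp_rw [heq]
      rw [integral_const_mul]
      field_simp
      rfl

open scoped RealInnerProductSpace in
lemma normsum_nonpos {d n : ℕ} (hd : 1 ≤ d) (z : Fin n → EuclideanSpace ℝ (Fin d))
    (u : Fin n → ℝ) (hu : ∑ i, u i = 0) :
    ∑ i, ∑ k, u i * u k * ‖z i - z k‖ ≤ 0 := by
  obtain ⟨c, hc, hint, hkey⟩ := keyint hd
  set W : EuclideanSpace ℝ (Fin d) → ℝ := fun g => Real.exp (-‖g‖^2 / 2) with hW
  have hmain : (∑ i, ∑ k, u i * u k * ‖z i - z k‖) * c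
      = ∫ g, ∑ i, ∑ k, u i * u k * (|⟪z i - z k, g⟫| * W g) := by
    rw [integral_finset_sum _ fun i _ => integrable_finset_sum _ fun k _ =>
      ((hint (z i - z k)).const_mul (u i * u k)), Finset.sum_mul]
    refine Finset.sum_congr rfl fun i _ => ?_
    rw [integral_finset_sum _ fun k _ => (hint (z i - z k)).const_mul (u i * u k),
      Finset.sum_mul]
    refine Finset.sum_congr rfl fun k _ => ?_
    rw [integral_const_mul, hkey (z i - z k)]
    ring
  have hptw : ∀ g, ∑ i, ∑ k, u i * u k * (|⟪z i - z k, g⟫| * W g) ≤ 0 := by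
    intro g
    have h1 : ∑ i, ∑ k, u i * u k * (|⟪z i - z k, g⟫| * W g)
        = (∑ i, ∑ k, u i * u k * |(fun j => ⟪z j, g⟫) i - (fun j => ⟪z j, g⟫) k|) * W g := by
      rw [Finset.sum_mul]
      refine Finset.sum_congr rfl fun i _ => ?_
      rw [Finset.sum_mul]
      refine Finset.sum_congr rfl fun k _ => ?_
      rw [inner_sub_left]
      ring
    rw [h1]
    have h2 := oneD u (fun j => ⟪z j, g⟫) hu
    have h3 : (0:ℝ) ≤ W g := (Real.exp_pos _).le
    nlinarith [h2, h3]
  have hle : ∫ g, ∑ i, ∑ k, u i * u k * (|⟪z i - z k, g⟫| * W g) ≤ 0 :=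
    integral_nonpos hptw
  nlinarith [hc, hmain ▸ hle]


/-- The weighted energy distance, as a function of the weights `w`, is convex
on the affine hyperplane `{w : ∑ i, w i = n}`. -/
theorem weighted_energy_distance_convex_on_hyperplane (d n : ℕ)
    (hd : 1 ≤ d) (hn : 1 ≤ n)
    (z y : Fin n → EuclideanSpace ℝ (Fin d))
    (f : (Fin n → ℝ) → ℝ)
    (hf : ∀ w : Fin n → ℝ,
      f w = (2 / (n : ℝ) ^ 2) * ∑ i, ∑ k, w i * ‖z i - y k‖ -
        (1 / (n : ℝ) ^ 2) * ∑ i, ∑ k, w i * w k * ‖z i - z k‖ -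
        (1 / (n : ℝ) ^ 2) * ∑ i, ∑ k, ‖y i - y k‖) :
    ∀ (w w' : Fin n → ℝ), (∑ i, w i = (n : ℝ)) → (∑ i, w' i = (n : ℝ)) →
      ∀ θ : ℝ, 0 ≤ θ → θ ≤ 1 →
        f (fun i => θ * w i + (1 - θ) * w' i) ≤ θ * f w + (1 - θ) * f w' := by
  intro w w' hw hw' θ hθ0 hθ1
  have hn1 : (1:ℝ) ≤ (n:ℝ) := by exact_mod_cast hn
  have hn2 : (0:ℝ) < (n:ℝ)^2 := by nlinarith
  set u : Fin n → ℝ := fun i => w i - w' i with hudef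
  have hu : ∑ i, u i = 0 := by
    simp only [hudef, Finset.sum_sub_distrib, hw, hw', sub_self]
  have hD : ∑ i, ∑ k, u i * u k * ‖z i - z k‖ ≤ 0 := normsum_nonpos hd z u hu
  simp only [hf]
  have hL : ∑ i, ∑ k, (θ * w i + (1-θ) * w' i) * ‖z i - y k‖
      = θ * (∑ i, ∑ k, w i * ‖z i - y k‖) + (1-θ) * (∑ i, ∑ k, w' i * ‖z i - y k‖) := by
    rw [Finset.mul_sum, Finset.mul_sum, ← Finset.sum_add_distrib]
    refine Finset.sum_congr rfl fun i _ => ?_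
    rw [Finset.mul_sum, Finset.mul_sum, ← Finset.sum_add_distrib]
    refine Finset.sum_congr rfl fun k _ => ?_
    ring
  have hQ : ∑ i, ∑ k, (θ * w i + (1-θ) * w' i) * (θ * w k + (1-θ) * w' k) * ‖z i - z k‖
      = θ * (∑ i, ∑ k, w i * w k * ‖z i - z k‖)
        + (1-θ) * (∑ i, ∑ k, w' i * w' k * ‖z i - z k‖)
        - θ * (1-θ) * (∑ i, ∑ k, u i * u k * ‖z i - z k‖) := by
    rw [Finset.mul_sum, Finset.mul_sum, Finset.mul_sum, ← Finset.sum_add_distrib,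
      ← Finset.sum_sub_distrib]
    refine Finset.sum_congr rfl fun i _ => ?_
    rw [Finset.mul_sum, Finset.mul_sum, Finset.mul_sum, ← Finset.sum_add_distrib,
      ← Finset.sum_sub_distrib]
    refine Finset.sum_congr rfl fun k _ => ?_
    simp only [hudef]
    ring
  rw [hL, hQ]
  have hslack : 0 ≤ (1/(n:ℝ)^2) * (θ * (1-θ) * (-(∑ i, ∑ k, u i * u k * ‖z i - z k‖))) :=
    mul_nonneg (by positivity)
      (mul_nonneg (mul_nonneg hθ0 (by linarith)) (by linarith))
  have h1n2 : (0:ℝ) < 1/(n:ℝ)^2 := by positivity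
  nlinarith [hslack, h1n2]
end

section
/- Let d ≥ 1 and n ≥ 1 be integers, let z_1, …, z_n and y_1, …, y_n be points in ℝ^d, and let λ > 0. Define g : ℝ^n → ℝ by g(w) = (2/n²) Σ_{i=1}^n Σ_{k=1}^n w_i ‖z_i − y_k‖ − (1/n²) Σ_{i=1}^n Σ_{k=1}^n w_i w_k ‖z_i − z_k‖ − (1/n²) Σ_{i=1}^n Σ_{k=1}^n ‖y_i − y_k‖ + (λ/n²) Σ_{i=1}^n w_i². Then g attains its minimum over the simplex Δ = {w ∈ ℝ^n : w_i ≥ 0 for all i, and Σ_{i=1}^n w_i = n} at exactly one point; that is, the penalized energy balancing weights exist and are unique. -/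
/-!
On the hyperplane `∑ w = n` the objective is quadratic; along a direction `u` with `∑ u = 0` its
second-order part is `(λ ∑ᵢ uᵢ² - ∑ᵢₖ uᵢ uₖ ‖zᵢ - zₖ‖) / n²`. The distance kernel is
conditionally negative definite: from `‖x‖ = C⁻¹ ∫₀^∞ (1 - e^{-s‖x‖²}) s^{-3/2} ds` with `C > 0`
and `∑ u = 0`, the double sum equals `-C⁻¹ ∫₀^∞ (∑ᵢₖ uᵢ uₖ e^{-s‖zᵢ - zₖ‖²}) s^{-3/2} ds ≤ 0`,
because Gaussian kernels are positive semidefinite: they are entrywise exponentials of the Gram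
matrices `2s ⟪zᵢ, zₖ⟫`, and entrywise powers of a positive semidefinite matrix stay positive
semidefinite by the Schur product theorem. So the ridge penalty makes the objective strictly
convex on the compact simplex, whose minimiser therefore exists and is unique.
-/

open MeasureTheory Set Real
open scoped InnerProductSpace Matrix

section PositiveSemidefinite

variable {ι : Type*} [Fintype ι]

theorem Matrix.PosSemidef.sum_sum_mul_nonneg {M : Matrix ι ι ℝ} (hM : M.PosSemidef)
    (b : ι → ℝ) : 0 ≤ ∑ i, ∑ k, b i * b k * M i k := by
  have := hM.dotProduct_mulVec_nonneg b
  simp only [star_trivial, dotProduct, Matrix.mulVec, Finset.mul_sum] at this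
  exact this.trans_eq (Finset.sum_congr rfl fun i _ => Finset.sum_congr rfl fun k _ => by ring)

theorem Matrix.PosSemidef.map_pow {M : Matrix ι ι ℝ} (hM : M.PosSemidef) (m : ℕ) :
    (M.map (· ^ m)).PosSemidef := by
  induction m with
  | zero =>
    have hone : M.map (· ^ 0) = Matrix.vecMulVec 1 (star 1) := by
      ext i k
      simp [Matrix.vecMulVec]
    rw [hone]
    exact Matrix.posSemidef_vecMulVec_self_star 1
  | succ m ih =>
    have hpow : M.map (· ^ (m + 1)) = M.map (· ^ m) ⊙ M := by
      ext i k
      simp [pow_succ]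
    rw [hpow]
    exact ih.hadamard hM

theorem Matrix.PosSemidef.sum_sum_mul_exp_nonneg {M : Matrix ι ι ℝ} (hM : M.PosSemidef)
    (b : ι → ℝ) : 0 ≤ ∑ i, ∑ k, b i * b k * exp (M i k) := by
  have hsum : HasSum (fun m : ℕ => (m.factorial : ℝ)⁻¹ * ∑ i, ∑ k, b i * b k * M i k ^ m)
      (∑ i, ∑ k, b i * b k * exp (M i k)) := by
    simp_rw [Finset.mul_sum]
    refine hasSum_sum fun i _ => hasSum_sum fun k _ => ?_
    have := (NormedSpace.expSeries_div_hasSum_exp (M i k)).mul_left (b i * b k)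
    rw [← exp_eq_exp_ℝ] at this
    exact this.congr_fun fun m => by ring
  exact hsum.nonneg fun m =>
    mul_nonneg (by positivity) (by simpa using (hM.map_pow m).sum_sum_mul_nonneg b)

end PositiveSemidefinite

section DistanceIntegral

lemma one_sub_exp_neg_nonneg {x : ℝ} (hx : 0 ≤ x) : 0 ≤ 1 - exp (-x) := by
  simpa using exp_le_one_iff.2 (neg_nonpos.2 hx)

lemma one_sub_exp_neg_le (x : ℝ) : 1 - exp (-x) ≤ x := by
  linarith [add_one_le_exp (-x)]

lemma integrableOn_one_sub_exp_neg_mul_rpow {t : ℝ} (ht : 0 ≤ t) :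
    IntegrableOn (fun s => (1 - exp (-(t * s))) * s ^ (-(3 / 2 : ℝ))) (Ioi 0) := by
  have hmeas : AEStronglyMeasurable
      (fun s : ℝ => (1 - exp (-(t * s))) * s ^ (-(3 / 2 : ℝ))) := by
    fun_prop
  have hnorm : ∀ s : ℝ, 0 < s →
      ‖(1 - exp (-(t * s))) * s ^ (-(3 / 2 : ℝ))‖ =
        (1 - exp (-(t * s))) * s ^ (-(3 / 2 : ℝ)) :=
    fun s hs => norm_of_nonneg <|
      mul_nonneg (one_sub_exp_neg_nonneg (by positivity)) (rpow_nonneg hs.le _)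
  rw [← Ioc_union_Ioi_eq_Ioi zero_le_one, integrableOn_union]
  constructor
  · have hint : IntegrableOn (fun s : ℝ => t * s ^ (-(1 / 2 : ℝ))) (Ioc 0 1) :=
      (intervalIntegral.intervalIntegrable_rpow' (by norm_num)).1.const_mul t
    refine hint.mono' hmeas.restrict ?_
    filter_upwards [ae_restrict_mem measurableSet_Ioc] with s hs
    have hrpow : s ^ (-(1 / 2 : ℝ)) = s * s ^ (-(3 / 2 : ℝ)) := by
      rw [← rpow_one_add' hs.1.le (by norm_num)]
      norm_num
    rw [hnorm s hs.1, hrpow, ← mul_assoc]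
    exact mul_le_mul_of_nonneg_right (one_sub_exp_neg_le _) (rpow_nonneg hs.1.le _)
  · refine (integrableOn_Ioi_rpow_of_lt (a := -(3 / 2 : ℝ)) (by norm_num) one_pos).mono'
      hmeas.restrict ?_
    filter_upwards [ae_restrict_mem measurableSet_Ioi] with s hs
    rw [hnorm s (one_pos.trans hs)]
    exact mul_le_of_le_one_left (rpow_nonneg (by linarith [hs.out]) _)
      (by linarith [exp_pos (-(t * s))])

lemma integral_one_sub_exp_neg_mul_rpow_pos :
    0 < ∫ s in Ioi (0 : ℝ), (1 - exp (-s)) * s ^ (-(3 / 2 : ℝ)) := by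
  have hpos : ∀ s : ℝ, 0 < s → 0 < (1 - exp (-s)) * s ^ (-(3 / 2 : ℝ)) := fun s hs =>
    mul_pos (sub_pos.2 (exp_lt_one_iff.2 (neg_neg_of_pos hs))) (rpow_pos_of_pos hs _)
  have hint := integrableOn_one_sub_exp_neg_mul_rpow zero_le_one
  simp only [one_mul] at hint
  rw [setIntegral_pos_iff_support_of_nonneg_ae ?_ hint]
  · rw [inter_eq_right.2 fun s (hs : s ∈ Ioi 0) => Function.mem_support.2 (hpos s hs).ne',
      volume_Ioi]
    exact ENNReal.zero_lt_top
  · filter_upwards [ae_restrict_mem measurableSet_Ioi] with s hs using (hpos s hs).le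

lemma integral_one_sub_exp_neg_mul_rpow {t : ℝ} (ht : 0 ≤ t) :
    ∫ s in Ioi (0 : ℝ), (1 - exp (-(t * s))) * s ^ (-(3 / 2 : ℝ)) =
      √t * ∫ s in Ioi (0 : ℝ), (1 - exp (-s)) * s ^ (-(3 / 2 : ℝ)) := by
  rcases ht.eq_or_lt with rfl | ht
  · simp
  have hscale : EqOn (fun s : ℝ => (1 - exp (-(t * s))) * s ^ (-(3 / 2 : ℝ)))
      (fun s => t ^ (3 / 2 : ℝ) * ((1 - exp (-(t * s))) * (t * s) ^ (-(3 / 2 : ℝ))))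
      (Ioi 0) := by
    intro s hs
    have hcancel : t ^ (3 / 2 : ℝ) * t ^ (-(3 / 2 : ℝ)) = 1 := by
      rw [← rpow_add ht]
      norm_num
    dsimp only
    rw [mul_rpow ht.le (le_of_lt hs)]
    linear_combination (-((1 - exp (-(t * s))) * s ^ (-(3 / 2 : ℝ)))) * hcancel
  rw [setIntegral_congr_fun measurableSet_Ioi hscale, integral_const_mul,
    integral_comp_mul_left_Ioi (fun x => (1 - exp (-x)) * x ^ (-(3 / 2 : ℝ))) 0 ht, mul_zero,
    smul_eq_mul, ← mul_assoc, sqrt_eq_rpow, ← rpow_neg_one, ← rpow_add ht]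
  norm_num

end DistanceIntegral

section DistanceKernel

variable {ι E : Type*} [Fintype ι] [NormedAddCommGroup E] [InnerProductSpace ℝ E]

theorem sum_sum_mul_exp_neg_mul_norm_sub_sq_nonneg (z : ι → E) (c : ι → ℝ) {s : ℝ}
    (hs : 0 ≤ s) : 0 ≤ ∑ i, ∑ k, c i * c k * exp (-(s * ‖z i - z k‖ ^ 2)) := by
  have hM : ((2 * s) • Matrix.gram ℝ z).PosSemidef :=
    (Matrix.posSemidef_gram ℝ z).smul (by positivity)
  convert hM.sum_sum_mul_exp_nonneg (fun i => c i * exp (-(s * ‖z i‖ ^ 2))) using 3 with i _ k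
  have hpolar : -(s * ‖z i - z k‖ ^ 2) =
      -(s * ‖z i‖ ^ 2) + -(s * ‖z k‖ ^ 2) + 2 * s * ⟪z i, z k⟫_ℝ := by
    rw [norm_sub_sq_real]
    ring
  simp only [Matrix.smul_apply, Matrix.gram_apply, smul_eq_mul, hpolar, exp_add]
  ring

theorem sum_sum_mul_norm_sub_nonpos (z : ι → E) (u : ι → ℝ) (hu : ∑ i, u i = 0) :
    ∑ i, ∑ k, u i * u k * ‖z i - z k‖ ≤ 0 := by
  set C := ∫ s in Ioi (0 : ℝ), (1 - exp (-s)) * s ^ (-(3 / 2 : ℝ))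
  set f : ι → ι → ℝ → ℝ := fun i k s =>
    u i * u k * ((1 - exp (-(‖z i - z k‖ ^ 2 * s))) * s ^ (-(3 / 2 : ℝ)))
  have hf : ∀ i k, IntegrableOn (f i k) (Ioi 0) := fun i k =>
    (integrableOn_one_sub_exp_neg_mul_rpow (sq_nonneg _)).const_mul _
  have hrep :
      (∑ i, ∑ k, u i * u k * ‖z i - z k‖) * C = ∫ s in Ioi 0, ∑ i, ∑ k, f i k s := by
    rw [integral_finsetSum _ fun i _ => integrable_finsetSum _ fun k _ => hf i k, Finset.sum_mul]
    refine Finset.sum_congr rfl fun i _ => ?_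
    rw [integral_finsetSum _ fun k _ => hf i k, Finset.sum_mul]
    refine Finset.sum_congr rfl fun k _ => ?_
    rw [integral_const_mul, integral_one_sub_exp_neg_mul_rpow (sq_nonneg _),
      sqrt_sq (norm_nonneg _), mul_assoc]
  have hnonpos : ∀ s ∈ Ioi (0 : ℝ), ∑ i, ∑ k, f i k s ≤ 0 := by
    intro s hs
    calc ∑ i, ∑ k, f i k s
        = ((∑ i, u i) * (∑ k, u k) -
            ∑ i, ∑ k, u i * u k * exp (-(s * ‖z i - z k‖ ^ 2))) * s ^ (-(3 / 2 : ℝ)) := by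
          rw [Finset.sum_mul_sum, ← Finset.sum_sub_distrib, Finset.sum_mul]
          refine Finset.sum_congr rfl fun i _ => ?_
          rw [← Finset.sum_sub_distrib, Finset.sum_mul]
          refine Finset.sum_congr rfl fun k _ => ?_
          simp only [f, mul_comm s]
          ring
      _ ≤ 0 := by
          rw [hu, zero_mul, zero_sub]
          exact mul_nonpos_of_nonpos_of_nonneg
            (neg_nonpos.2 (sum_sum_mul_exp_neg_mul_norm_sub_sq_nonneg z u (le_of_lt hs)))
            (rpow_nonneg (le_of_lt hs) _)
  refine nonpos_of_mul_nonpos_left ?_ integral_one_sub_exp_neg_mul_rpow_pos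
  rw [hrep]
  exact setIntegral_nonpos measurableSet_Ioi hnonpos

end DistanceKernel

section ConvexCombination

variable {ι : Type*} [Fintype ι]

theorem sum_sum_smul_add_smul_mul {κ : Type*} [Fintype κ] (c : ι → κ → ℝ)
    (x y : ι → ℝ)
    (a b : ℝ) :
    ∑ i, ∑ k, (a • x + b • y) i * c i k =
      a * ∑ i, ∑ k, x i * c i k + b * ∑ i, ∑ k, y i * c i k := by
  simp only [Finset.mul_sum, ← Finset.sum_add_distrib]
  refine Finset.sum_congr rfl fun i _ => Finset.sum_congr rfl fun k _ => ?_
  simp only [Pi.add_apply, Pi.smul_apply, smul_eq_mul]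
  ring

theorem sum_sum_smul_add_smul_mul_mul (K : ι → ι → ℝ) (x y : ι → ℝ) {a b : ℝ}
    (hab : a + b = 1) :
    ∑ i, ∑ k, (a • x + b • y) i * (a • x + b • y) k * K i k =
      a * ∑ i, ∑ k, x i * x k * K i k + b * ∑ i, ∑ k, y i * y k * K i k -
        a * b * ∑ i, ∑ k, (x - y) i * (x - y) k * K i k := by
  simp only [Finset.mul_sum, ← Finset.sum_add_distrib, ← Finset.sum_sub_distrib]
  refine Finset.sum_congr rfl fun i _ => Finset.sum_congr rfl fun k _ => ?_
  simp only [Pi.add_apply, Pi.smul_apply, Pi.sub_apply, smul_eq_mul]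
  linear_combination (a * x i * x k + b * y i * y k) * K i k * hab

theorem sum_smul_add_smul_sq (x y : ι → ℝ) {a b : ℝ} (hab : a + b = 1) :
    ∑ i, (a • x + b • y) i ^ 2 =
      a * ∑ i, x i ^ 2 + b * ∑ i, y i ^ 2 - a * b * ∑ i, (x - y) i ^ 2 := by
  simp only [Finset.mul_sum, ← Finset.sum_add_distrib, ← Finset.sum_sub_distrib]
  refine Finset.sum_congr rfl fun i _ => ?_
  simp only [Pi.add_apply, Pi.smul_apply, Pi.sub_apply, smul_eq_mul]
  linear_combination (a * x i ^ 2 + b * y i ^ 2) * hab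

end ConvexCombination

section PenalizedEnergy

variable {ι E : Type*} [Fintype ι] [NormedAddCommGroup E]

def weightSimplex (ι : Type*) [Fintype ι] (c : ℝ) : Set (ι → ℝ) :=
  {w | (∀ i, 0 ≤ w i) ∧ ∑ i, w i = c}

theorem convex_weightSimplex (c : ℝ) : Convex ℝ (weightSimplex ι c) := by
  intro x hx y hy a b ha hb hab
  refine ⟨fun i => by
    simpa using add_nonneg (mul_nonneg ha (hx.1 i)) (mul_nonneg hb (hy.1 i)), ?_⟩
  simp [Finset.sum_add_distrib, ← Finset.mul_sum, hx.2, hy.2, ← add_mul, hab]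

theorem isCompact_weightSimplex (c : ℝ) : IsCompact (weightSimplex ι c) := by
  have hclosed : IsClosed (weightSimplex ι c) := by
    simp only [weightSimplex, ofPred_and, ofPred_forall]
    exact (isClosed_iInter fun i => isClosed_le continuous_const (continuous_apply i)).inter
      (isClosed_eq (by fun_prop) continuous_const)
  refine (isCompact_Icc (a := 0) (b := fun _ => c)).of_isClosed_subset hclosed
    fun w hw => ⟨hw.1, fun i => ?_⟩
  exact hw.2 ▸ Finset.single_le_sum (fun j _ => hw.1 j) (Finset.mem_univ i)

noncomputable def penalizedEnergy (z y : ι → E) (lam : ℝ) (w : ι → ℝ) : ℝ :=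
  (2 / (Fintype.card ι : ℝ) ^ 2) * ∑ i, ∑ k, w i * ‖z i - y k‖ -
    (1 / (Fintype.card ι : ℝ) ^ 2) * ∑ i, ∑ k, w i * w k * ‖z i - z k‖ -
    (1 / (Fintype.card ι : ℝ) ^ 2) * ∑ i, ∑ k, ‖y i - y k‖ +
    (lam / (Fintype.card ι : ℝ) ^ 2) * ∑ i, w i ^ 2

theorem continuous_penalizedEnergy (z y : ι → E) (lam : ℝ) :
    Continuous (penalizedEnergy z y lam) := by
  unfold penalizedEnergy
  fun_prop

theorem penalizedEnergy_smul_add_smul (z y : ι → E) (lam : ℝ) (x v : ι → ℝ) {a b : ℝ}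
    (hab : a + b = 1) :
    penalizedEnergy z y lam (a • x + b • v) =
      a * penalizedEnergy z y lam x + b * penalizedEnergy z y lam v -
        a * b / (Fintype.card ι : ℝ) ^ 2 *
          (lam * ∑ i, (x - v) i ^ 2 - ∑ i, ∑ k, (x - v) i * (x - v) k * ‖z i - z k‖) := by
  simp only [penalizedEnergy]
  rw [sum_sum_smul_add_smul_mul (fun i k => ‖z i - y k‖) x v a b,
    sum_sum_smul_add_smul_mul_mul (fun i k => ‖z i - z k‖) x v hab,
    sum_smul_add_smul_sq x v hab]
  linear_combination (1 / (Fintype.card ι : ℝ) ^ 2 * ∑ i, ∑ k, ‖y i - y k‖) * hab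

theorem strictConvexOn_penalizedEnergy [InnerProductSpace ℝ E] (z y : ι → E) {lam : ℝ}
    (hlam : 0 < lam) (c : ℝ) :
    StrictConvexOn ℝ {w | ∑ i, w i = c} (penalizedEnergy z y lam) := by
  have hlinear : IsLinearMap ℝ fun w : ι → ℝ => ∑ i, w i :=
    ⟨fun _ _ => Finset.sum_add_distrib, fun _ _ => (Finset.mul_sum ..).symm⟩
  refine ⟨convex_hyperplane hlinear c, fun x hx v hv hxv a b ha hb hab => ?_⟩
  have hsum : ∑ i, (x - v) i = 0 := by simp [Finset.sum_sub_distrib, hx.out, hv.out]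
  obtain ⟨i, hi⟩ := Function.ne_iff.1 (sub_ne_zero.2 hxv)
  have hcard : 0 < (Fintype.card ι : ℝ) := by
    have := Nonempty.intro i
    positivity
  have hsq : 0 < ∑ i, (x - v) i ^ 2 :=
    Finset.sum_pos' (fun _ _ => sq_nonneg _) ⟨i, Finset.mem_univ i, pow_two_pos_of_ne_zero hi⟩
  have hcnd := sum_sum_mul_norm_sub_nonpos z (x - v) hsum
  rw [penalizedEnergy_smul_add_smul z y lam x v hab, smul_eq_mul, smul_eq_mul, sub_lt_self_iff]
  have hpenalty := mul_pos hlam hsq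
  exact mul_pos (by positivity) (by linarith)

end PenalizedEnergy

theorem penalized_energy_balancing_weights_exist_unique_general (d n : ℕ)
    (z y : Fin n → EuclideanSpace ℝ (Fin d)) (lam : ℝ) (hlam : 0 < lam)
    (g : (Fin n → ℝ) → ℝ)
    (hg : ∀ w : Fin n → ℝ,
      g w = (2 / (n : ℝ) ^ 2) * ∑ i, ∑ k, w i * ‖z i - y k‖ -
        (1 / (n : ℝ) ^ 2) * ∑ i, ∑ k, w i * w k * ‖z i - z k‖ -
        (1 / (n : ℝ) ^ 2) * ∑ i, ∑ k, ‖y i - y k‖ +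
        (lam / (n : ℝ) ^ 2) * ∑ i, (w i) ^ 2) :
    ∃! w : Fin n → ℝ,
      (∀ i, 0 ≤ w i) ∧ (∑ i, w i = (n : ℝ)) ∧
        ∀ v : Fin n → ℝ, (∀ i, 0 ≤ v i) → (∑ i, v i = (n : ℝ)) → g w ≤ g v := by
  obtain rfl : g = penalizedEnergy z y lam := funext fun w => by simp [hg, penalizedEnergy]
  have hconvex := (strictConvexOn_penalizedEnergy z y hlam n).subset (fun _ hw => hw.2)
    (convex_weightSimplex (n : ℝ))
  obtain ⟨w, hw, hmin⟩ := (isCompact_weightSimplex (n : ℝ)).exists_isMinOn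
    ⟨1, fun _ => zero_le_one, by simp⟩ (continuous_penalizedEnergy z y lam).continuousOn
  refine ⟨w, ⟨hw.1, hw.2, fun v hv₀ hv => hmin ⟨hv₀, hv⟩⟩, ?_⟩
  rintro v ⟨hv₀, hv, hvmin⟩
  exact hconvex.eq_of_isMinOn (fun u hu => hvmin u hu.1 hu.2) hmin ⟨hv₀, hv⟩ hw

/-- The penalized energy balancing weights exist and are unique: the penalized
weighted energy distance attains its minimum over the simplex
`{w : ∀ i, 0 ≤ w i, ∑ i, w i = n}` at exactly one point. -/
theorem penalized_energy_balancing_weights_exist_unique (d n : ℕ)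
    (hd : 1 ≤ d) (hn : 1 ≤ n)
    (z y : Fin n → EuclideanSpace ℝ (Fin d)) (lam : ℝ) (hlam : 0 < lam)
    (g : (Fin n → ℝ) → ℝ)
    (hg : ∀ w : Fin n → ℝ,
      g w = (2 / (n : ℝ) ^ 2) * ∑ i, ∑ k, w i * ‖z i - y k‖ -
        (1 / (n : ℝ) ^ 2) * ∑ i, ∑ k, w i * w k * ‖z i - z k‖ -
        (1 / (n : ℝ) ^ 2) * ∑ i, ∑ k, ‖y i - y k‖ +
        (lam / (n : ℝ) ^ 2) * ∑ i, (w i) ^ 2) :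
    ∃! w : Fin n → ℝ,
      (∀ i, 0 ≤ w i) ∧ (∑ i, w i = (n : ℝ)) ∧
        ∀ v : Fin n → ℝ, (∀ i, 0 ≤ v i) → (∑ i, v i = (n : ℝ)) → g w ≤ g v :=
  penalized_energy_balancing_weights_exist_unique_general d n z y lam hlam g hg
end

section
/- Let d ≥ 1 and n ≥ 1 be integers, let (Ω, F, P) be a probability space, and let Z_1, …, Z_n : Ω → ℝ^d be independent and identically distributed with common law μ, a Borel probability measure on ℝ^d. Let T : ℝ^d → ℝ^d be measurable and let h : ℝ^d → [0, ∞) be measurable such that the pushforward of μ under T has density h with respect to μ (i.e., μ∘T^{-1} = h·μ). Assume ∫ ‖z‖ dμ(z) < ∞, ∫ ‖T(z)‖ dμ(z) < ∞, ∫ h(z) ‖z‖ dμ(z) < ∞, and ∫ h(z) ‖T(z)‖ dμ(z) < ∞. Then E[ (2/n²) Σ_{i,k} h(Z_i) ‖Z_i − T(Z_k)‖ − (1/n²) Σ_{i,k} h(Z_i) h(Z_k) ‖Z_i − Z_k‖ − (1/n²) Σ_{i,k} ‖T(Z_i) − T(Z_k)‖ ] = (2/n) E[ h(Z_1) ‖Z_1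 − T(Z_1)‖ ]. In particular, the expected weighted energy distance between the Radon–Nikodym-weighted empirical distribution of the Z_i and the empirical distribution of the shifted points T(Z_i) is of order 1/n. -/
open MeasureTheory ProbabilityTheory
open scoped BigOperators ENNReal

lemma integral_withDensity_ofReal' {α : Type*} [MeasurableSpace α] {μ : Measure α}
    {w : α → ℝ} (hw : Measurable w) (h0 : ∀ x, 0 ≤ w x) (g : α → ℝ) :
    ∫ x, g x ∂(μ.withDensity fun x => ENNReal.ofReal (w x)) = ∫ x, w x * g x ∂μ := by
  have h1 : (fun x => ENNReal.ofReal (w x)) = fun x => ((w x).toNNReal : ℝ≥0∞) := rfl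
  rw [h1, integral_withDensity_eq_integral_smul hw.real_toNNReal]
  refine integral_congr_ae (Filter.Eventually.of_forall fun x => ?_)
  simp [NNReal.smul_def, Real.coe_toNNReal _ (h0 x)]

lemma withDensity_prod_eq' {α : Type*} [MeasurableSpace α] (μ : Measure α) [IsProbabilityMeasure μ]
    {f g : α → ℝ≥0∞} (hf : Measurable f) (hg : Measurable g)
    {ρ₁ ρ₂ : Measure α} [SigmaFinite ρ₁] [SigmaFinite ρ₂]
    (h₁ : ρ₁ = μ.withDensity f) (h₂ : ρ₂ = μ.withDensity g) :
    ρ₁.prod ρ₂ = (μ.prod μ).withDensity fun p => f p.1 * g p.2 := by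
  refine Measure.prod_eq fun s t hs ht => ?_
  rw [withDensity_apply _ (hs.prod ht), ← Measure.prod_restrict,
    lintegral_prod_mul hf.aemeasurable hg.aemeasurable,
    h₁, h₂, withDensity_apply _ hs, withDensity_apply _ ht]

lemma double_sum_ite {n : ℕ} (a c : ℝ) :
    (∑ _i : Fin n, ∑ _k : Fin n, if _i = _k then a else c)
      = (n : ℝ) * a + ((n : ℝ) ^ 2 - n) * c := by
  have h1 : ∀ i k : Fin n, (if i = k then a else c) = (if i = k then a - c else 0) + c := by
    intro i k; split <;> ring
  simp_rw [h1, Finset.sum_add_distrib, Finset.sum_ite_eq, Finset.sum_const, Finset.mem_univ,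
    if_pos, Finset.card_univ, Fintype.card_fin, nsmul_eq_mul]
  rw [Finset.sum_const, Finset.card_univ, Fintype.card_fin, nsmul_eq_mul]
  ring

/-- The expected weighted energy distance between the Radon–Nikodym-weighted
empirical distribution of an i.i.d. sample and the empirical distribution of
the shifted sample equals `(2/n) E[h(Z₁)‖Z₁ − T(Z₁)‖]`, and is hence of order
`1/n`. -/
theorem expected_weighted_energy_distance_density_ratio
    (d n : ℕ) (hd : 1 ≤ d) (hn : 0 < n)
    (Ω : Type*) [MeasurableSpace Ω] (P : Measure Ω) [IsProbabilityMeasure P]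
    (Z : Fin n → Ω → EuclideanSpace ℝ (Fin d))
    (hZmeas : ∀ i, Measurable (Z i))
    (hindep : iIndepFun Z P)
    (μ : Measure (EuclideanSpace ℝ (Fin d))) [IsProbabilityMeasure μ]
    (hlaw : ∀ i, Measure.map (Z i) P = μ)
    (T : EuclideanSpace ℝ (Fin d) → EuclideanSpace ℝ (Fin d)) (hT : Measurable T)
    (h : EuclideanSpace ℝ (Fin d) → ℝ) (hhmeas : Measurable h) (hh0 : ∀ z, 0 ≤ h z)
    (hdensity : Measure.map T μ = μ.withDensity (fun z => ENNReal.ofReal (h z)))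
    (hmom1 : Integrable (fun z => ‖z‖) μ)
    (hmom2 : Integrable (fun z => ‖T z‖) μ)
    (hmom3 : Integrable (fun z => h z * ‖z‖) μ)
    (hmom4 : Integrable (fun z => h z * ‖T z‖) μ) :
    ∫ ω, ((2 / (n : ℝ) ^ 2) * ∑ i, ∑ k, h (Z i ω) * ‖Z i ω - T (Z k ω)‖ -
          (1 / (n : ℝ) ^ 2) * ∑ i, ∑ k, h (Z i ω) * h (Z k ω) * ‖Z i ω - Z k ω‖ -
          (1 / (n : ℝ) ^ 2) * ∑ i, ∑ k, ‖T (Z i ω) - T (Z k ω)‖) ∂P =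
      (2 / (n : ℝ)) *
        ∫ ω, h (Z ⟨0, hn⟩ ω) * ‖Z ⟨0, hn⟩ ω - T (Z ⟨0, hn⟩ ω)‖ ∂P := by
  haveI : IsProbabilityMeasure (Measure.map T μ) := Measure.isProbabilityMeasure_map hT.aemeasurable
  -- the three kernel functions on EuclideanSpace ℝ (Fin d) × EuclideanSpace ℝ (Fin d)
  set F₁ : EuclideanSpace ℝ (Fin d) × EuclideanSpace ℝ (Fin d) → ℝ := fun p => h p.1 * ‖p.1 - T p.2‖ with hF₁def
  set F₂ : EuclideanSpace ℝ (Fin d) × EuclideanSpace ℝ (Fin d) → ℝ := fun p => h p.1 * h p.2 * ‖p.1 - p.2‖ with hF₂def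
  set F₃ : EuclideanSpace ℝ (Fin d) × EuclideanSpace ℝ (Fin d) → ℝ := fun p => ‖T p.1 - T p.2‖ with hF₃def
  have hmF₁ : Measurable F₁ :=
    (hhmeas.comp measurable_fst).mul ((measurable_fst.sub (hT.comp measurable_snd)).norm)
  have hmF₂ : Measurable F₂ :=
    ((hhmeas.comp measurable_fst).mul (hhmeas.comp measurable_snd)).mul
      ((measurable_fst.sub measurable_snd).norm)
  have hmF₃ : Measurable F₃ := ((hT.comp measurable_fst).sub (hT.comp measurable_snd)).norm
  -- h is integrable (its integral is 1)
  have hint_h : Integrable h μ := by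
    refine ⟨hhmeas.aestronglyMeasurable, ?_⟩
    rw [hasFiniteIntegral_iff_ofReal (Filter.Eventually.of_forall hh0)]
    calc ∫⁻ z, ENNReal.ofReal (h z) ∂μ
        = (μ.withDensity fun z => ENNReal.ofReal (h z)) Set.univ := by
          rw [withDensity_apply _ MeasurableSet.univ, Measure.restrict_univ]
      _ = (Measure.map T μ) Set.univ := by rw [hdensity]
      _ = 1 := measure_univ
      _ < ⊤ := ENNReal.one_lt_top
  -- integrability of the kernels on μ × μ
  have hprod31 : Integrable (fun p : EuclideanSpace ℝ (Fin d) × EuclideanSpace ℝ (Fin d) => (h p.1 * ‖p.1‖) * 1) (μ.prod μ) :=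
    hmom3.mul_prod (integrable_const 1)
  have hF₁int : Integrable F₁ (μ.prod μ) := by
    refine Integrable.mono' ((by simpa using hprod31 : Integrable
        (fun p : EuclideanSpace ℝ (Fin d) × EuclideanSpace ℝ (Fin d) => h p.1 * ‖p.1‖) (μ.prod μ)).add (hint_h.mul_prod hmom2))
      hmF₁.aestronglyMeasurable (Filter.Eventually.of_forall fun p => ?_)
    have h1 : ‖F₁ p‖ = h p.1 * ‖p.1 - T p.2‖ := by
      rw [hF₁def]; exact Real.norm_of_nonneg (mul_nonneg (hh0 _) (norm_nonneg _))
    rw [h1]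
    calc h p.1 * ‖p.1 - T p.2‖ ≤ h p.1 * (‖p.1‖ + ‖T p.2‖) :=
          mul_le_mul_of_nonneg_left (norm_sub_le _ _) (hh0 _)
      _ = h p.1 * ‖p.1‖ + h p.1 * ‖T p.2‖ := by ring
  have hF₂int : Integrable F₂ (μ.prod μ) := by
    refine Integrable.mono' ((hmom3.mul_prod hint_h).add (hint_h.mul_prod hmom3))
      hmF₂.aestronglyMeasurable (Filter.Eventually.of_forall fun p => ?_)
    have h1 : ‖F₂ p‖ = h p.1 * h p.2 * ‖p.1 - p.2‖ := by
      rw [hF₂def]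
      exact Real.norm_of_nonneg (mul_nonneg (mul_nonneg (hh0 _) (hh0 _)) (norm_nonneg _))
    rw [h1]
    calc h p.1 * h p.2 * ‖p.1 - p.2‖ ≤ h p.1 * h p.2 * (‖p.1‖ + ‖p.2‖) :=
          mul_le_mul_of_nonneg_left (norm_sub_le _ _) (mul_nonneg (hh0 _) (hh0 _))
      _ = h p.1 * ‖p.1‖ * h p.2 + h p.1 * (h p.2 * ‖p.2‖) := by ring
  have hF₃int : Integrable F₃ (μ.prod μ) := by
    refine Integrable.mono'
      ((by simpa using (hmom2.mul_prod (integrable_const 1)) : Integrable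
          (fun p : EuclideanSpace ℝ (Fin d) × EuclideanSpace ℝ (Fin d) => ‖T p.1‖) (μ.prod μ)).add
        (by simpa using ((integrable_const (1:ℝ)).mul_prod hmom2) : Integrable
          (fun p : EuclideanSpace ℝ (Fin d) × EuclideanSpace ℝ (Fin d) => ‖T p.2‖) (μ.prod μ)))
      hmF₃.aestronglyMeasurable (Filter.Eventually.of_forall fun p => ?_)
    rw [show ‖F₃ p‖ = ‖T p.1 - T p.2‖ from Real.norm_of_nonneg (norm_nonneg _)]
    exact norm_sub_le _ _
  -- diagonal integrability
  have hF₁diag : Integrable (fun z : EuclideanSpace ℝ (Fin d) => F₁ (z, z)) μ := by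
    refine Integrable.mono' (hmom3.add hmom4) ((hmF₁.comp
      (measurable_id.prodMk measurable_id)).aestronglyMeasurable)
      (Filter.Eventually.of_forall fun z => ?_)
    rw [show ‖F₁ (z, z)‖ = h z * ‖z - T z‖ from
      Real.norm_of_nonneg (mul_nonneg (hh0 _) (norm_nonneg _))]
    calc h z * ‖z - T z‖ ≤ h z * (‖z‖ + ‖T z‖) :=
          mul_le_mul_of_nonneg_left (norm_sub_le _ _) (hh0 _)
      _ = h z * ‖z‖ + h z * ‖T z‖ := by ring
  have hF₂diag : Integrable (fun z : EuclideanSpace ℝ (Fin d) => F₂ (z, z)) μ := by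
    have : (fun z : EuclideanSpace ℝ (Fin d) => F₂ (z, z)) = fun _ => (0:ℝ) := by
      funext z; simp [hF₂def]
    rw [this]; exact integrable_const 0
  have hF₃diag : Integrable (fun z : EuclideanSpace ℝ (Fin d) => F₃ (z, z)) μ := by
    have : (fun z : EuclideanSpace ℝ (Fin d) => F₃ (z, z)) = fun _ => (0:ℝ) := by
      funext z; simp [hF₃def]
    rw [this]; exact integrable_const 0
  -- generic computation of pairwise expectations
  have main : ∀ (F : EuclideanSpace ℝ (Fin d) × EuclideanSpace ℝ (Fin d) → ℝ), Measurable F → Integrable F (μ.prod μ) →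
      Integrable (fun z => F (z, z)) μ → ∀ i k : Fin n,
      Integrable (fun ω => F (Z i ω, Z k ω)) P ∧
      ∫ ω, F (Z i ω, Z k ω) ∂P
        = if i = k then ∫ z, F (z, z) ∂μ else ∫ p, F p ∂(μ.prod μ) := by
    intro F hFm hFi hFd i k
    by_cases hik : i = k
    · subst hik
      rw [if_pos rfl]
      have hmap := hlaw i
      have hdm : Measurable fun z : EuclideanSpace ℝ (Fin d) => F (z, z) :=
        hFm.comp (measurable_id.prodMk measurable_id)
      constructor
      · have := (integrable_map_measure hdm.aestronglyMeasurable
          (hZmeas i).aemeasurable).mp (by rwa [hmap])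
        simpa [Function.comp_def] using this
      · rw [← hmap]
        exact (integral_map (hZmeas i).aemeasurable hdm.aestronglyMeasurable).symm
    · rw [if_neg hik]
      have hpair : Measure.map (fun ω => (Z i ω, Z k ω)) P = μ.prod μ := by
        have hI := hindep.indepFun hik
        rw [indepFun_iff_map_prod_eq_prod_map_map (hZmeas i).aemeasurable
          (hZmeas k).aemeasurable] at hI
        rw [hI, hlaw i, hlaw k]
      have hpm : Measurable fun ω => (Z i ω, Z k ω) := (hZmeas i).prodMk (hZmeas k)
      constructor
      · have := (integrable_map_measure hFm.aestronglyMeasurable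
          hpm.aemeasurable).mp (by rwa [hpair])
        simpa [Function.comp_def] using this
      · rw [← hpair]
        exact (integral_map hpm.aemeasurable hFm.aestronglyMeasurable).symm
  -- values of the off-diagonal expectations: define C and show all three coincide
  set C : ℝ := ∫ p : EuclideanSpace ℝ (Fin d) × EuclideanSpace ℝ (Fin d), F₂ p ∂(μ.prod μ) with hCdef
  set A : ℝ := ∫ z : EuclideanSpace ℝ (Fin d), F₁ (z, z) ∂μ with hAdef
  have hmul : Measurable fun p : EuclideanSpace ℝ (Fin d) × EuclideanSpace ℝ (Fin d) => h p.1 * h p.2 :=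
    (hhmeas.comp measurable_fst).mul (hhmeas.comp measurable_snd)
  have hρρ : (Measure.map T μ).prod (Measure.map T μ)
      = (μ.prod μ).withDensity fun p => ENNReal.ofReal (h p.1 * h p.2) := by
    have := withDensity_prod_eq' μ hhmeas.ennreal_ofReal hhmeas.ennreal_ofReal
      hdensity hdensity
    rw [this]
    congr 1
    funext p
    rw [ENNReal.ofReal_mul (hh0 _)]
  have hE3 : ∫ p : EuclideanSpace ℝ (Fin d) × EuclideanSpace ℝ (Fin d), F₃ p ∂(μ.prod μ) = C := by
    have hmapTT : Measure.map (Prod.map T T) (μ.prod μ)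
        = (Measure.map T μ).prod (Measure.map T μ) := (Measure.map_prod_map μ μ hT hT).symm
    have hgm3 : Measurable fun p : EuclideanSpace ℝ (Fin d) × EuclideanSpace ℝ (Fin d) =>
        ‖p.1 - p.2‖ := (measurable_fst.sub measurable_snd).norm
    have hstep : ∫ p : EuclideanSpace ℝ (Fin d) × EuclideanSpace ℝ (Fin d), F₃ p ∂(μ.prod μ)
        = ∫ p : EuclideanSpace ℝ (Fin d) × EuclideanSpace ℝ (Fin d), ‖p.1 - p.2‖ ∂(Measure.map (Prod.map T T) (μ.prod μ)) := by
      rw [integral_map (hT.prodMap hT).aemeasurable hgm3.aestronglyMeasurable]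
      rfl
    rw [hstep, hmapTT, hρρ,
      integral_withDensity_ofReal' hmul (fun p => mul_nonneg (hh0 _) (hh0 _)) _]
  have hE1 : ∫ p : EuclideanSpace ℝ (Fin d) × EuclideanSpace ℝ (Fin d), F₁ p ∂(μ.prod μ) = C := by
    have hmapIdT : Measure.map (Prod.map id T) (μ.prod μ)
        = μ.prod (Measure.map T μ) := by
      rw [← Measure.map_prod_map μ μ measurable_id hT, Measure.map_id]
    have hmuρ : μ.prod (Measure.map T μ)
        = (μ.prod μ).withDensity fun p => ENNReal.ofReal (h p.2) := by
      have h1 : μ = μ.withDensity (1 : EuclideanSpace ℝ (Fin d) → ℝ≥0∞) := (withDensity_one (μ := μ)).symm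
      have := withDensity_prod_eq' μ measurable_const hhmeas.ennreal_ofReal h1 hdensity
      rw [this]
      congr 1
      funext p
      simp [Pi.one_apply, one_mul]
    have hgm1 : Measurable fun p : EuclideanSpace ℝ (Fin d) × EuclideanSpace ℝ (Fin d) =>
        h p.1 * ‖p.1 - p.2‖ :=
      (hhmeas.comp measurable_fst).mul ((measurable_fst.sub measurable_snd).norm)
    have hstep : ∫ p : EuclideanSpace ℝ (Fin d) × EuclideanSpace ℝ (Fin d), F₁ p ∂(μ.prod μ)
        = ∫ p : EuclideanSpace ℝ (Fin d) × EuclideanSpace ℝ (Fin d), h p.1 * ‖p.1 - p.2‖ ∂(Measure.map (Prod.map id T) (μ.prod μ)) := by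
      rw [integral_map (measurable_id.prodMap hT).aemeasurable hgm1.aestronglyMeasurable]
      rfl
    have hms : Measurable fun p : EuclideanSpace ℝ (Fin d) × EuclideanSpace ℝ (Fin d) => h p.2 :=
      hhmeas.comp measurable_snd
    rw [hstep, hmapIdT, hmuρ,
      integral_withDensity_ofReal' hms (fun p => hh0 _) _]
    rw [hCdef]
    refine integral_congr_ae (Filter.Eventually.of_forall fun p => ?_)
    simp only [hF₂def]
    ring
  -- the right-hand side integral equals A
  have hRHS : ∫ ω, h (Z ⟨0, hn⟩ ω) * ‖Z ⟨0, hn⟩ ω - T (Z ⟨0, hn⟩ ω)‖ ∂P = A := by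
    have := (main F₁ hmF₁ hF₁int hF₁diag ⟨0, hn⟩ ⟨0, hn⟩).2
    simpa using this
  -- compute the expectation of each double sum
  have key : ∀ (F : EuclideanSpace ℝ (Fin d) × EuclideanSpace ℝ (Fin d) → ℝ), Measurable F → Integrable F (μ.prod μ) →
      Integrable (fun z => F (z, z)) μ →
      (Integrable (fun ω => ∑ i : Fin n, ∑ k : Fin n, F (Z i ω, Z k ω)) P ∧
       ∫ ω, ∑ i : Fin n, ∑ k : Fin n, F (Z i ω, Z k ω) ∂P
        = (n : ℝ) * (∫ z, F (z, z) ∂μ) + ((n : ℝ) ^ 2 - n) * ∫ p, F p ∂(μ.prod μ)) := by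
    intro F hFm hFi hFd
    constructor
    · exact integrable_finset_sum _ fun i _ => integrable_finset_sum _ fun k _ =>
        (main F hFm hFi hFd i k).1
    · rw [integral_finset_sum _ fun i _ => integrable_finset_sum _ fun k _ =>
        (main F hFm hFi hFd i k).1]
      have : ∀ i : Fin n, ∫ ω, ∑ k : Fin n, F (Z i ω, Z k ω) ∂P
          = ∑ k : Fin n, ∫ ω, F (Z i ω, Z k ω) ∂P := fun i =>
        integral_finset_sum _ fun k _ => (main F hFm hFi hFd i k).1
      simp_rw [this, (fun i k => (main F hFm hFi hFd i k).2)]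
      exact double_sum_ite _ _
  have k1 := key F₁ hmF₁ hF₁int hF₁diag
  have k2 := key F₂ hmF₂ hF₂int hF₂diag
  have k3 := key F₃ hmF₃ hF₃int hF₃diag
  -- diagonal values of F₂, F₃ vanish
  have hd2 : ∫ z : EuclideanSpace ℝ (Fin d), F₂ (z, z) ∂μ = 0 := by
    simp [hF₂def]
  have hd3 : ∫ z : EuclideanSpace ℝ (Fin d), F₃ (z, z) ∂μ = 0 := by
    simp [hF₃def]
  -- put everything together
  have hsplit : ∫ ω, ((2 / (n : ℝ) ^ 2) * ∑ i, ∑ k, h (Z i ω) * ‖Z i ω - T (Z k ω)‖ -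
          (1 / (n : ℝ) ^ 2) * ∑ i, ∑ k, h (Z i ω) * h (Z k ω) * ‖Z i ω - Z k ω‖ -
          (1 / (n : ℝ) ^ 2) * ∑ i, ∑ k, ‖T (Z i ω) - T (Z k ω)‖) ∂P
      = (2 / (n : ℝ) ^ 2) * (∫ ω, ∑ i : Fin n, ∑ k : Fin n, F₁ (Z i ω, Z k ω) ∂P)
        - (1 / (n : ℝ) ^ 2) * (∫ ω, ∑ i : Fin n, ∑ k : Fin n, F₂ (Z i ω, Z k ω) ∂P)
        - (1 / (n : ℝ) ^ 2) * (∫ ω, ∑ i : Fin n, ∑ k : Fin n, F₃ (Z i ω, Z k ω) ∂P) := by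
    have i1 : Integrable (fun ω => (2 / (n : ℝ) ^ 2) *
        ∑ i : Fin n, ∑ k : Fin n, F₁ (Z i ω, Z k ω)) P := k1.1.const_mul _
    have i2 : Integrable (fun ω => (1 / (n : ℝ) ^ 2) *
        ∑ i : Fin n, ∑ k : Fin n, F₂ (Z i ω, Z k ω)) P := k2.1.const_mul _
    have i3 : Integrable (fun ω => (1 / (n : ℝ) ^ 2) *
        ∑ i : Fin n, ∑ k : Fin n, F₃ (Z i ω, Z k ω)) P := k3.1.const_mul _
    have e1 : ∫ ω, ((2 / (n : ℝ) ^ 2) * ∑ i : Fin n, ∑ k : Fin n, F₁ (Z i ω, Z k ω) -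
          (1 / (n : ℝ) ^ 2) * ∑ i : Fin n, ∑ k : Fin n, F₂ (Z i ω, Z k ω) -
          (1 / (n : ℝ) ^ 2) * ∑ i : Fin n, ∑ k : Fin n, F₃ (Z i ω, Z k ω)) ∂P
        = (∫ ω, ((2 / (n : ℝ) ^ 2) * ∑ i : Fin n, ∑ k : Fin n, F₁ (Z i ω, Z k ω) -
            (1 / (n : ℝ) ^ 2) * ∑ i : Fin n, ∑ k : Fin n, F₂ (Z i ω, Z k ω)) ∂P)
          - ∫ ω, (1 / (n : ℝ) ^ 2) * ∑ i : Fin n, ∑ k : Fin n, F₃ (Z i ω, Z k ω) ∂P :=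
      integral_sub (i1.sub i2) i3
    have e2 : ∫ ω, ((2 / (n : ℝ) ^ 2) * ∑ i : Fin n, ∑ k : Fin n, F₁ (Z i ω, Z k ω) -
          (1 / (n : ℝ) ^ 2) * ∑ i : Fin n, ∑ k : Fin n, F₂ (Z i ω, Z k ω)) ∂P
        = (∫ ω, (2 / (n : ℝ) ^ 2) * ∑ i : Fin n, ∑ k : Fin n, F₁ (Z i ω, Z k ω) ∂P)
          - ∫ ω, (1 / (n : ℝ) ^ 2) * ∑ i : Fin n, ∑ k : Fin n, F₂ (Z i ω, Z k ω) ∂P :=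
      integral_sub i1 i2
    rw [e1, e2, integral_const_mul, integral_const_mul, integral_const_mul]
  rw [hsplit, k1.2, k2.2, k3.2, hd2, hd3, hE1, hE3, hRHS]
  have hn' : (n : ℝ) ≠ 0 := Nat.cast_ne_zero.mpr hn.ne'
  field_simp
  ring
end
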